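/- Let k, n ≥ 1 be natural numbers, let z be a complex number with Re(z) > 0, and let u, v be complex numbers with u ∈ 𝔻 and v^n ∈ 𝔻'. Then F_k(z/n; u, v^n) = ∑_{β^n=1} F_k(z; u, βv), where the sum runs over all n-th roots of unity β. -/

import Mathlib

/-!
Substituting `t = s ^ n` turns `t ^ (z / n)` into `s ^ z` and `dt / (v⁻ⁿ - t)` into
`n sⁿ⁻¹ ds / (v⁻ⁿ - sⁿ)`. Since `sⁿ - v⁻ⁿ = ∏_β (s - β v⁻¹)` over the `n`-th roots of unity `β`,
comparing logarithmic derivatives splits this kernel into `∑_β ds / ((β v)⁻¹ - s)`.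
Integrating termwise needs each summand to be integrable: the only singularity is at `s = 1`,
where `‖log (1 - u s^z)‖ ≤ A - log (1 - s)` for a constant `A`, and
`(A - log x) ^ k = O(x ^ (-k / (k + 1)))` is integrable at `0`.
-/

open Complex MeasureTheory Polynomial

/-- `t^z := exp(z · log t)` with `log t` the real logarithm. -/
noncomputable def tpow (z : ℂ) (t : ℝ) : ℂ := Complex.exp (z * Real.log t)

/-- `F_k(z;u,v) = ∫₀¹ log^k(1 − u t^z)/(v⁻¹ − t) dt`. -/
noncomputable def Fk (k : ℕ) (z u v : ℂ) : ℂ :=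
  ∫ t in (0:ℝ)..1, (Complex.log (1 - u * tpow z t)) ^ k / (v⁻¹ - (t : ℂ))

open Finset Set

noncomputable def FkIntegrand (k : ℕ) (z u v : ℂ) (t : ℝ) : ℂ :=
  log (1 - u * tpow z t) ^ k / (v⁻¹ - t)

theorem Fk_eq_setIntegral (k : ℕ) (z u v : ℂ) :
    Fk k z u v = ∫ t in Ioo (0 : ℝ) 1, FkIntegrand k z u v t := by
  rw [Fk, intervalIntegral.integral_of_le zero_le_one, integral_Ioc_eq_integral_Ioo]
  rfl

theorem prod_nthRootsFinset_sub {R : Type*} [CommRing R] [IsDomain R] {n : ℕ} {ζ : R}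
    (hζ : IsPrimitiveRoot ζ n) (hn : 0 < n) (c : R) :
    ∏ β ∈ nthRootsFinset n (1 : R), (c - β) = c ^ n - 1 := by
  simpa [eval_prod] using (congrArg (eval c) (X_pow_sub_one_eq_prod hn hζ)).symm

section PartialFractions

variable {K : Type*} [NontriviallyNormedField K] {n : ℕ} {ζ : K}

theorem sum_nthRootsFinset_inv_sub (hζ : IsPrimitiveRoot ζ n) (hn : 0 < n) {c : K}
    (hc : c ^ n ≠ 1) :
    ∑ β ∈ nthRootsFinset n (1 : K), (c - β)⁻¹ = n * c ^ (n - 1) / (c ^ n - 1) := by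
  have hne : ∀ β ∈ nthRootsFinset n (1 : K), c - β ≠ 0 := fun β hβ h =>
    hc (sub_eq_zero.1 h ▸ (mem_nthRootsFinset hn 1).1 hβ)
  have hprod : (fun x => ∏ β ∈ nthRootsFinset n (1 : K), (x - β)) = fun x => x ^ n - 1 :=
    funext (prod_nthRootsFinset_sub hζ hn)
  have := logDeriv_prod (f := fun β x => x - β) hne fun β _ => differentiableAt_id.sub_const β
  rw [hprod] at this
  simpa [logDeriv_apply] using this.symm

theorem sum_nthRootsFinset_inv_inv_mul_sub (hζ : IsPrimitiveRoot ζ n) (hn : 0 < n) {v σ : K}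
    (hv : v ≠ 0) (hσv : (σ * v) ^ n ≠ 1) :
    ∑ β ∈ nthRootsFinset n (1 : K), ((β * v)⁻¹ - σ)⁻¹ = n * σ ^ (n - 1) / ((v ^ n)⁻¹ - σ ^ n) := by
  have hinv : ∀ β ∈ nthRootsFinset n (1 : K), β⁻¹ ∈ nthRootsFinset n (1 : K) := fun β hβ => by
    rw [mem_nthRootsFinset hn] at hβ ⊢; rw [inv_pow, hβ, inv_one]
  have hne : ∀ β ∈ nthRootsFinset n (1 : K), β ≠ 0 := fun β hβ h => by
    rw [mem_nthRootsFinset hn, h, zero_pow hn.ne'] at hβ; exact zero_ne_one hβ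
  calc ∑ β ∈ nthRootsFinset n (1 : K), ((β * v)⁻¹ - σ)⁻¹
      = ∑ β ∈ nthRootsFinset n (1 : K), ((β⁻¹ * v)⁻¹ - σ)⁻¹ :=
        sum_nbij' (·⁻¹) (·⁻¹) hinv hinv (fun β _ => inv_inv β) (fun β _ => inv_inv β)
          (fun β _ => by rw [inv_inv])
    _ = ∑ β ∈ nthRootsFinset n (1 : K), -v * (σ * v - β)⁻¹ := by
        refine sum_congr rfl fun β hβ => ?_
        have hσvβ : σ * v - β ≠ 0 := fun h => hσv (sub_eq_zero.1 h ▸ (mem_nthRootsFinset hn 1).1 hβ)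
        rw [mul_inv, inv_inv, show β * v⁻¹ - σ = -((σ * v - β) * v⁻¹) by field_simp; ring,
          inv_neg, mul_inv, inv_inv, neg_mul, mul_comm]
    _ = n * σ ^ (n - 1) / ((v ^ n)⁻¹ - σ ^ n) := by
        rw [← mul_sum, sum_nthRootsFinset_inv_sub hζ hn hσv]
        obtain ⟨m, rfl⟩ : ∃ m, n = m + 1 := ⟨n - 1, by omega⟩
        have hD : (σ * v) ^ (m + 1) - 1 ≠ 0 := sub_ne_zero.2 hσv
        have hD' : (v ^ (m + 1))⁻¹ - σ ^ (m + 1) ≠ 0 := by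
          intro h
          rw [sub_eq_zero] at h
          rw [mul_pow, ← h, inv_mul_cancel₀ (pow_ne_zero _ hv)] at hσv
          exact hσv rfl
        rw [mul_div_assoc', div_eq_div_iff hD hD']
        simp only [Nat.add_sub_cancel]
        field_simp
        ring

end PartialFractions

theorem norm_tpow (z : ℂ) {s : ℝ} (hs : 0 < s) : ‖tpow z s‖ = s ^ z.re := by
  rw [tpow, norm_exp, Real.rpow_def_of_pos hs, mul_comm]
  simp [mul_re]

theorem tpow_div_natCast_pow (z : ℂ) {n : ℕ} (hn : n ≠ 0) (s : ℝ) :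
    tpow (z / n) (s ^ n) = tpow z s := by
  rw [tpow, tpow, Real.log_pow]
  push_cast
  field_simp

theorem norm_log_le_of_le_norm {w : ℂ} {x : ℝ} (hx0 : 0 < x) (hx1 : x ≤ 1) (hxw : x ≤ ‖w‖)
    (hw2 : ‖w‖ ≤ 2) : ‖log w‖ ≤ Real.log 2 + Real.pi - Real.log x := by
  have hw0 : 0 < ‖w‖ := hx0.trans_le hxw
  have hre : |Real.log ‖w‖| ≤ Real.log 2 - Real.log x := by
    have := Real.log_nonpos hx0.le hx1
    have := Real.log_nonneg one_le_two
    rw [abs_le]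
    constructor
    · linarith [Real.log_le_log hx0 hxw]
    · linarith [Real.log_le_log hw0 hw2]
  calc ‖log w‖ ≤ |(log w).re| + |(log w).im| := norm_le_abs_re_add_abs_im _
    _ ≤ (Real.log 2 - Real.log x) + Real.pi := by
        rw [log_re, log_im]
        exact add_le_add hre (abs_arg_le_pi w)
    _ = _ := by ring

theorem min_mul_one_sub_le_one_sub_rpow {a t : ℝ} (ha : 0 < a) (ht0 : 0 ≤ t) (ht1 : t ≤ 1) :
    min a 1 * (1 - t) ≤ 1 - t ^ a := by
  rcases le_total a 1 with h | h
  · have := rpow_one_add_le_one_add_mul_self (by linarith : -1 ≤ t - 1) ha.le h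
    rw [add_sub_cancel] at this
    rw [min_eq_left h]
    linarith
  · have := Real.rpow_le_rpow_of_exponent_ge' ht0 ht1 zero_le_one h
    rw [Real.rpow_one] at this
    rw [min_eq_right h]
    linarith

theorem norm_log_one_sub_mul_tpow_le {z u : ℂ} (hz : 0 < z.re) (hu : ‖u‖ ≤ 1) {s : ℝ}
    (hs0 : 0 < s) (hs1 : s < 1) :
    ‖log (1 - u * tpow z s)‖ ≤
      (Real.log 2 + Real.pi - Real.log (min z.re 1)) - Real.log (1 - s) := by
  have hm : 0 < min z.re 1 := lt_min hz one_pos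
  have hus : ‖u * tpow z s‖ ≤ s ^ z.re := by
    rw [norm_mul, norm_tpow z hs0]
    exact mul_le_of_le_one_left (by positivity) hu
  have hs_lt : s ^ z.re < 1 := Real.rpow_lt_one hs0.le hs1 hz
  have hlow := min_mul_one_sub_le_one_sub_rpow hz hs0.le hs1.le
  have h := norm_log_le_of_le_norm (x := min z.re 1 * (1 - s)) (w := 1 - u * tpow z s)
    (by nlinarith) (by nlinarith [min_le_right z.re 1])
    (by linarith [norm_sub_norm_le (1 : ℂ) (u * tpow z s), norm_one (α := ℂ)])
    (by linarith [norm_sub_le (1 : ℂ) (u * tpow z s), norm_one (α := ℂ)])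
  rwa [Real.log_mul hm.ne' (by linarith), ← sub_sub] at h

theorem sub_log_pow_le_rpow {A x : ℝ} (hA : 0 ≤ A) (hx0 : 0 < x) (hx1 : x ≤ 1) (k : ℕ) :
    (A - Real.log x) ^ k ≤ (A + (k + 1)) ^ k * x ^ (-(k / (k + 1) : ℝ)) := by
  set ε : ℝ := (k + 1)⁻¹
  have hε : 0 < ε := by positivity
  have hxε : 1 ≤ x ^ (-ε) := Real.one_le_rpow_of_pos_of_le_one_of_nonpos hx0 hx1 (by linarith)
  have hlog : -Real.log x ≤ (k + 1) * x ^ (-ε) := by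
    have := Real.log_le_rpow_div (inv_nonneg.2 hx0.le) hε
    rwa [Real.log_inv, Real.inv_rpow hx0.le, ← Real.rpow_neg hx0.le, div_eq_mul_inv, inv_inv,
      mul_comm] at this
  have hbase : A - Real.log x ≤ (A + (k + 1)) * x ^ (-ε) := by
    nlinarith
  calc (A - Real.log x) ^ k ≤ ((A + (k + 1)) * x ^ (-ε)) ^ k :=
        pow_le_pow_left₀ (by linarith [Real.log_nonpos hx0.le hx1]) hbase k
    _ = (A + (k + 1)) ^ k * x ^ (-(k / (k + 1) : ℝ)) := by
        rw [mul_pow, ← Real.rpow_natCast (x ^ (-ε)), ← Real.rpow_mul hx0.le]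
        congr 2
        simp only [ε]
        field_simp

theorem integrableOn_FkIntegrand (k : ℕ) {z u v : ℂ} (hz : 0 < z.re) (hu : ‖u‖ ≤ 1)
    (hv : ∀ t ∈ Icc (0 : ℝ) 1, v⁻¹ - t ≠ 0) :
    IntegrableOn (FkIntegrand k z u v) (Ioo 0 1) := by
  set A := Real.log 2 + Real.pi - Real.log (min z.re 1)
  have hA : 0 ≤ A := by
    have := Real.log_nonpos (lt_min hz one_pos).le (min_le_right z.re 1)
    have := Real.log_nonneg one_le_two
    linarith [Real.pi_pos]
  obtain ⟨M, hM⟩ := isCompact_Icc.exists_bound_of_continuousOn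
    ((continuous_const.sub continuous_ofReal).continuousOn.inv₀ hv)
  have hr : -1 < -(k / (k + 1) : ℝ) := by
    rw [neg_lt_neg_iff, div_lt_one (by positivity)]
    linarith
  have hdom : IntegrableOn (fun t : ℝ => (1 - t) ^ (-(k / (k + 1) : ℝ))) (Ioo 0 1) := by
    have h := (intervalIntegral.intervalIntegrable_rpow' (a := 0) (b := 1) hr).comp_sub_left 1
    simp only [sub_self, sub_zero] at h
    exact h.2.mono_set Ioo_subset_Ioc_self
  refine (hdom.const_mul ((A + (k + 1)) ^ k * M)).mono' ?_ ?_
  · unfold FkIntegrand tpow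
    exact Measurable.aestronglyMeasurable (by fun_prop)
  · rw [ae_restrict_iff' measurableSet_Ioo]
    filter_upwards with t ⟨ht0, ht1⟩
    have hlog := norm_log_one_sub_mul_tpow_le hz hu ht0 ht1
    calc ‖FkIntegrand k z u v t‖
        = ‖log (1 - u * tpow z t)‖ ^ k * ‖(v⁻¹ - t)⁻¹‖ := by
          rw [FkIntegrand, div_eq_mul_inv, norm_mul, norm_pow]
      _ ≤ (A - Real.log (1 - t)) ^ k * M :=
          mul_le_mul (pow_le_pow_left₀ (norm_nonneg _) hlog k) (hM t ⟨ht0.le, ht1.le⟩)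
            (norm_nonneg _) (pow_nonneg ((norm_nonneg _).trans hlog) k)
      _ ≤ (A + (k + 1)) ^ k * (1 - t) ^ (-(k / (k + 1) : ℝ)) * M :=
          mul_le_mul_of_nonneg_right (sub_log_pow_le_rpow hA (by linarith) (by linarith) k)
            ((norm_nonneg _).trans (hM 0 ⟨le_rfl, zero_le_one⟩))
      _ = _ := by ring

theorem setIntegral_Ioo_comp_pow {E : Type*} [NormedAddCommGroup E] [NormedSpace ℝ E] {n : ℕ}
    (hn : n ≠ 0) (f : ℝ → E) :
    ∫ s in Ioo (0 : ℝ) 1, ((n : ℝ) * s ^ (n - 1)) • f (s ^ n) = ∫ t in Ioo (0 : ℝ) 1, f t := by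
  have himage : (· ^ n) '' Set.Ioo (0 : ℝ) 1 = Set.Ioo 0 1 := by
    ext t
    constructor
    · rintro ⟨s, ⟨hs0, hs1⟩, rfl⟩
      exact ⟨pow_pos hs0 n, pow_lt_one₀ hs0.le hs1 hn⟩
    · rintro ⟨ht0, ht1⟩
      refine ⟨t ^ (n⁻¹ : ℝ), ⟨Real.rpow_pos_of_pos ht0 _, ?_⟩, Real.rpow_inv_natCast_pow ht0.le hn⟩
      exact Real.rpow_lt_one ht0.le ht1 (by positivity)
  have h := integral_image_eq_integral_abs_deriv_smul (s := Set.Ioo (0 : ℝ) 1) measurableSet_Ioo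
    (fun s _ => (hasDerivAt_pow n s).hasDerivWithinAt)
    ((pow_left_strictMonoOn₀ hn).injOn.mono fun s hs => hs.1.le) f
  rw [himage] at h
  rw [h]
  refine setIntegral_congr_fun measurableSet_Ioo fun s hs => ?_
  rw [abs_of_nonneg (by have := hs.1; positivity)]

theorem sub_ofReal_ne_zero_of_one_le_norm {w : ℂ} (hw1 : 1 ≤ ‖w‖) (hw : w ≠ 1) {t : ℝ}
    (ht : t ∈ Icc (0 : ℝ) 1) : w - t ≠ 0 := by
  intro h
  rw [sub_eq_zero] at h
  subst h
  rw [norm_real, Real.norm_of_nonneg ht.1] at hw1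
  exact hw (by rw [le_antisymm ht.2 hw1, ofReal_one])

theorem smul_FkIntegrand_comp_pow (k : ℕ) {n : ℕ} (hn : 0 < n) (z u : ℂ) {v : ℂ} (hv : v ≠ 0)
    (hv1 : ‖v‖ ≤ 1) {s : ℝ} (hs : s ∈ Ioo (0 : ℝ) 1) :
    ((n : ℝ) * s ^ (n - 1)) • FkIntegrand k (z / n) u (v ^ n) (s ^ n)
      = ∑ β ∈ nthRootsFinset n (1 : ℂ), FkIntegrand k z u (β * v) s := by
  have hsv : ((s : ℂ) * v) ^ n ≠ 1 := by
    refine ne_of_apply_ne norm (ne_of_lt ?_)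
    obtain ⟨hs0, hs1⟩ := hs
    rw [norm_one, norm_pow, norm_mul, norm_real, Real.norm_of_nonneg hs0.le]
    exact pow_lt_one₀ (by positivity) (by nlinarith [norm_nonneg v]) hn.ne'
  rw [FkIntegrand, tpow_div_natCast_pow z hn.ne']
  simp only [FkIntegrand, div_eq_mul_inv, ← mul_sum,
    sum_nthRootsFinset_inv_inv_mul_sub (Complex.isPrimitiveRoot_exp n hn.ne') hn hv hsv, real_smul]
  push_cast
  ring

theorem statement15_general (k n : ℕ) (hn : 1 ≤ n) (z u v : ℂ) (hz : 0 < z.re)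
    (hu1 : ‖u‖ ≤ 1)
    (hvn0 : v ^ n ≠ 0) (hvn1 : ‖v ^ n‖ ≤ 1) (hvn2 : v ^ n ≠ 1) :
    Fk k (z / (n : ℂ)) u (v ^ n) = ∑ β ∈ nthRootsFinset n (1 : ℂ), Fk k z u (β * v) := by
  have hn0 : n ≠ 0 := by omega
  have hv : v ≠ 0 := by rintro rfl; exact hvn0 (zero_pow hn0)
  have hv1 : ‖v‖ ≤ 1 := (pow_le_one_iff_of_nonneg (norm_nonneg v) hn0).1 (norm_pow v n ▸ hvn1)
  have hint : ∀ β ∈ nthRootsFinset n (1 : ℂ),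
      IntegrableOn (FkIntegrand k z u (β * v)) (Ioo 0 1) := by
    intro β hβ
    have hβn : β ^ n = 1 := (mem_nthRootsFinset hn 1).1 hβ
    refine integrableOn_FkIntegrand k hz hu1 fun t ht => sub_ofReal_ne_zero_of_one_le_norm ?_ ?_ ht
    · rw [norm_inv, norm_mul, norm_eq_one_of_pow_eq_one hβn hn0, one_mul]
      exact one_le_inv_iff₀.2 ⟨norm_pos_iff.2 hv, hv1⟩
    · rw [Ne, inv_eq_one]
      exact fun h => hvn2 (by rw [← one_pow n, ← h, mul_pow, hβn, one_mul])
  simp only [Fk_eq_setIntegral]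
  rw [← setIntegral_Ioo_comp_pow hn0,
    setIntegral_congr_fun measurableSet_Ioo fun s => smul_FkIntegrand_comp_pow k hn z u hv hv1,
    integral_finsetSum _ hint]

theorem statement15 (k n : ℕ) (hk : 1 ≤ k) (hn : 1 ≤ n) (z u v : ℂ) (hz : 0 < z.re)
    (hu0 : u ≠ 0) (hu1 : ‖u‖ ≤ 1)
    (hvn0 : v ^ n ≠ 0) (hvn1 : ‖v ^ n‖ ≤ 1) (hvn2 : v ^ n ≠ 1) :
    Fk k (z / (n : ℂ)) u (v ^ n) = ∑ β ∈ nthRootsFinset n (1 : ℂ), Fk k z u (β * v) :=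
  statement15_general k n hn z u v hz hu1 hvn0 hvn1 hvn2
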